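/- arXiv:1310.0785 — 2 statements merged into one kernel-verified Lean document; each statement's English description precedes it below -/
import Mathlib

section
/- Let V(x) = |x|^2 on the reals. If a tamed drift b^h and tamed diffusion σ^h satisfy |b^h(x)|^2 h ≤ μ(1+V(x)) and 2x·b^h(x) + |σ^h(x)|^2 ≤ ρ(1+V(x)) for all x ∈ ℝ, then the Euler iterates X_{k+1} = X_k + b^h(X_k)h + σ^h(X_k)ΔW_{k+1} (with ΔW_{k+1} a centered Gaussian increment of variance h, independent of X_k) satisfy E[1+V(X_{k+1})] ≤ (1+(ρ+μ)h) E[1+V(X_k)], and consequently E[V(X_k)] ≤ e^{(ρ+μ)T} E[1+V(X_0)] for all 0 ≤ k ≤ ⌊T/h⌋. -/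
/-!
Conditioning on `X_k`, the Gaussian increment is centred with variance `h` and independent of
`X_k`, so `E[X_{k+1}²] = E[(X_k + b(X_k) h)²] + h E[σ(X_k)²]`; the two taming conditions bound
the right-hand side by `E[X_k²] + (ρ + μ) h E[1 + X_k²]`. Iterating the resulting linear growth
bound and using `(1 + (ρ + μ) h)^k ≤ e^{(ρ + μ) k h} ≤ e^{(ρ + μ) T}` gives the uniform bound.
-/

open MeasureTheory ProbabilityTheory Real

open scoped NNReal

section GaussianIncrement

variable {Ω : Type*} [MeasurableSpace Ω] {P : Measure Ω} {W : Ω → ℝ} {v : ℝ≥0}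

lemma memLp_of_map_eq_gaussianReal (hW : Measurable W) (hlaw : P.map W = gaussianReal 0 v)
    (p : ℝ≥0) : MemLp W p P := by
  have h := memLp_id_gaussianReal (μ := 0) (v := v) p
  rw [← hlaw] at h
  exact (memLp_map_measure_iff aestronglyMeasurable_id hW.aemeasurable).mp h

lemma integral_eq_zero_of_map_eq_gaussianReal (hW : Measurable W)
    (hlaw : P.map W = gaussianReal 0 v) : ∫ ω, W ω ∂P = 0 := by
  rw [← integral_map (f := fun x : ℝ => x) hW.aemeasurable aestronglyMeasurable_id, hlaw,
    integral_id_gaussianReal]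

lemma integral_sq_eq_of_map_eq_gaussianReal (hW : Measurable W)
    (hlaw : P.map W = gaussianReal 0 v) : ∫ ω, W ω ^ 2 ∂P = v := by
  rw [← integral_map (f := fun x : ℝ => x ^ 2) hW.aemeasurable (by fun_prop), hlaw,
    ← variance_fun_id_gaussianReal (μ := 0), variance_eq_integral measurable_id'.aemeasurable]
  simp

end GaussianIncrement

section SecondMoments

variable {Ω : Type*} [MeasurableSpace Ω] {P : Measure Ω}

variable [IsFiniteMeasure P]

lemma MeasureTheory.MemLp.comp_of_sq_le_mul_one_add_sq {Y : Ω → ℝ} {f : ℝ → ℝ} {C : ℝ}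
    (hY : MemLp Y 2 P) (hf : Measurable f) (hfC : ∀ x, f x ^ 2 ≤ C * (1 + x ^ 2)) :
    MemLp (fun ω => f (Y ω)) 2 P := by
  have hfY : AEStronglyMeasurable (fun ω => f (Y ω)) P :=
    (hf.comp_aemeasurable hY.1.aemeasurable).aestronglyMeasurable
  refine (memLp_two_iff_integrable_sq hfY).mpr <|
    (((integrable_const 1).add hY.integrable_sq).const_mul C).mono' (hfY.pow 2) ?_
  exact .of_forall fun ω => by
    rw [Real.norm_eq_abs, abs_of_nonneg (sq_nonneg _)]
    exact hfC (Y ω)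

variable {A B W : Ω → ℝ}

lemma ProbabilityTheory.IndepFun.memLp_two_add_mul (hA : MemLp A 2 P) (hB : MemLp B 2 P)
    (hW : MemLp W 2 P) (hind : IndepFun (fun ω => (A ω, B ω)) W P) :
    MemLp (fun ω => A ω + B ω * W ω) 2 P := by
  have hABW : Integrable (fun ω => A ω * B ω * W ω) P :=
    (hind.comp (measurable_fst.mul measurable_snd) measurable_id).integrable_mul
      (hA.integrable_mul hB) (hW.integrable one_le_two)
  have hBW : Integrable (fun ω => B ω ^ 2 * W ω ^ 2) P :=
    (hind.comp (measurable_snd.pow_const 2) (measurable_id.pow_const 2)).integrable_mul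
      hB.integrable_sq hW.integrable_sq
  refine (memLp_two_iff_integrable_sq (hA.1.add (hB.1.mul hW.1))).mpr <|
    ((hA.integrable_sq.add (hABW.const_mul 2)).add hBW).congr (.of_forall fun ω => ?_)
  simp only [Pi.add_apply, Pi.mul_apply]
  ring

/-- The cross term vanishes because `W` is centred and independent of `(A, B)`. -/
lemma ProbabilityTheory.IndepFun.integral_sq_add_mul (hA : MemLp A 2 P) (hB : MemLp B 2 P)
    (hW : MemLp W 2 P) (hind : IndepFun (fun ω => (A ω, B ω)) W P) (hW0 : ∫ ω, W ω ∂P = 0) :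
    ∫ ω, (A ω + B ω * W ω) ^ 2 ∂P = ∫ ω, A ω ^ 2 ∂P + (∫ ω, W ω ^ 2 ∂P) * ∫ ω, B ω ^ 2 ∂P := by
  have hind_AB : IndepFun (fun ω => A ω * B ω) W P :=
    hind.comp (measurable_fst.mul measurable_snd) measurable_id
  have hind_B2 : IndepFun (fun ω => B ω ^ 2) (fun ω => W ω ^ 2) P :=
    hind.comp (measurable_snd.pow_const 2) (measurable_id.pow_const 2)
  have hABW : Integrable (fun ω => A ω * B ω * W ω) P :=
    hind_AB.integrable_mul (hA.integrable_mul hB) (hW.integrable one_le_two)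
  have hBW : Integrable (fun ω => B ω ^ 2 * W ω ^ 2) P :=
    hind_B2.integrable_mul hB.integrable_sq hW.integrable_sq
  calc ∫ ω, (A ω + B ω * W ω) ^ 2 ∂P
      = ∫ ω, A ω ^ 2 + 2 * (A ω * B ω * W ω) + B ω ^ 2 * W ω ^ 2 ∂P := by
        congr 1; ext ω; ring
    _ = ∫ ω, A ω ^ 2 ∂P + 2 * ∫ ω, A ω * B ω * W ω ∂P + ∫ ω, B ω ^ 2 * W ω ^ 2 ∂P := by
        rw [integral_add (f := fun ω => A ω ^ 2 + 2 * (A ω * B ω * W ω))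
          (hA.integrable_sq.add (hABW.const_mul 2)) hBW,
          integral_add hA.integrable_sq (hABW.const_mul 2), integral_const_mul]
    _ = ∫ ω, A ω ^ 2 ∂P + (∫ ω, W ω ^ 2 ∂P) * ∫ ω, B ω ^ 2 ∂P := by
        rw [hind_AB.integral_fun_mul_eq_mul_integral (hA.integrable_mul hB).1 hW.1,
          hind_B2.integral_fun_mul_eq_mul_integral hB.integrable_sq.1 hW.integrable_sq.1, hW0]
        ring

end SecondMoments

section TamedCoefficients

variable {x b s h μ ρ : ℝ}

lemma add_mul_sq_le_of_tamed (hh : 0 ≤ h) (hb : |b| ^ 2 * h ≤ μ * (1 + x ^ 2)) :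
    (x + b * h) ^ 2 ≤ (2 + 2 * μ * h) * (1 + x ^ 2) := by
  rw [sq_abs] at hb
  nlinarith [sq_nonneg (x - b * h), mul_le_mul_of_nonneg_right hb hh]

lemma sq_le_of_tamed (hh : 0 < h) (hb : |b| ^ 2 * h ≤ μ * (1 + x ^ 2))
    (hs : 2 * x * b + |s| ^ 2 ≤ ρ * (1 + x ^ 2)) :
    s ^ 2 ≤ (ρ + 1 + μ / h) * (1 + x ^ 2) := by
  rw [sq_abs] at hb hs
  have hb' : b ^ 2 ≤ μ / h * (1 + x ^ 2) := by
    rw [div_mul_eq_mul_div, le_div_iff₀ hh]; exact hb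
  nlinarith [sq_nonneg (x + b)]

-- `(x + b h)² + h s²` is `E[X_{k+1}² | X_k = x]`.
lemma one_add_add_mul_sq_add_mul_sq_le_of_tamed (hh : 0 ≤ h)
    (hb : |b| ^ 2 * h ≤ μ * (1 + x ^ 2)) (hs : 2 * x * b + |s| ^ 2 ≤ ρ * (1 + x ^ 2)) :
    1 + ((x + b * h) ^ 2 + h * s ^ 2) ≤ (1 + (ρ + μ) * h) * (1 + x ^ 2) := by
  rw [sq_abs] at hb hs
  nlinarith [mul_le_mul_of_nonneg_right hb hh, mul_le_mul_of_nonneg_right hs hh]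

end TamedCoefficients

lemma one_add_mul_pow_le_exp_of_le_floor {c h T : ℝ} {k : ℕ} (hc : 0 ≤ c) (hh : 0 < h)
    (hT : 0 ≤ T) (hk : k ≤ ⌊T / h⌋₊) : (1 + c * h) ^ k ≤ exp (c * T) := by
  have hkh : k * h ≤ T := by
    rw [← le_div_iff₀ hh]
    exact (Nat.cast_le.mpr hk).trans (Nat.floor_le (div_nonneg hT hh.le))
  calc (1 + c * h) ^ k ≤ exp (c * h) ^ k := by
        gcongr; linarith [add_one_le_exp (c * h)]
    _ = exp (c * (k * h)) := by rw [← exp_nat_mul]; ring_nf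
    _ ≤ exp (c * T) := by gcongr

section TamedEulerStep

variable {Ω : Type*} [MeasurableSpace Ω] {P : Measure Ω} [IsProbabilityMeasure P]
  {Y W : Ω → ℝ} {b s : ℝ → ℝ} {h μ ρ : ℝ}

lemma tamedEuler_step_moment_le (hh : 0 < h) (hb : Measurable b) (hs : Measurable s)
    (hY : MemLp Y 2 P) (hW : MemLp W 2 P) (hW0 : ∫ ω, W ω ∂P = 0) (hWh : ∫ ω, W ω ^ 2 ∂P = h)
    (hind : IndepFun Y W P) (htame1 : ∀ x, |b x| ^ 2 * h ≤ μ * (1 + x ^ 2))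
    (htame2 : ∀ x, 2 * x * b x + |s x| ^ 2 ≤ ρ * (1 + x ^ 2)) :
    MemLp (fun ω => Y ω + b (Y ω) * h + s (Y ω) * W ω) 2 P ∧
      ∫ ω, (1 + (Y ω + b (Y ω) * h + s (Y ω) * W ω) ^ 2) ∂P
        ≤ (1 + (ρ + μ) * h) * ∫ ω, (1 + Y ω ^ 2) ∂P := by
  have hA : MemLp (fun ω => Y ω + b (Y ω) * h) 2 P :=
    hY.comp_of_sq_le_mul_one_add_sq (f := fun x => x + b x * h) (by fun_prop)
      fun x => add_mul_sq_le_of_tamed hh.le (htame1 x)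
  have hB : MemLp (fun ω => s (Y ω)) 2 P :=
    hY.comp_of_sq_le_mul_one_add_sq hs fun x => sq_le_of_tamed hh (htame1 x) (htame2 x)
  have hAB : IndepFun (fun ω => (Y ω + b (Y ω) * h, s (Y ω))) W P :=
    hind.comp (φ := fun y => (y + b y * h, s y)) (by fun_prop) measurable_id
  have hnext := hAB.memLp_two_add_mul hA hB hW
  have hmean : Integrable (fun ω => (Y ω + b (Y ω) * h) ^ 2 + h * s (Y ω) ^ 2) P :=
    hA.integrable_sq.add (hB.integrable_sq.const_mul h)
  refine ⟨hnext, ?_⟩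
  calc ∫ ω, (1 + (Y ω + b (Y ω) * h + s (Y ω) * W ω) ^ 2) ∂P
      = 1 + (∫ ω, (Y ω + b (Y ω) * h) ^ 2 ∂P + h * ∫ ω, s (Y ω) ^ 2 ∂P) := by
        rw [integral_add (integrable_const 1) hnext.integrable_sq,
          hAB.integral_sq_add_mul hA hB hW hW0, hWh]
        simp
    _ = ∫ ω, (1 + ((Y ω + b (Y ω) * h) ^ 2 + h * s (Y ω) ^ 2)) ∂P := by
        rw [integral_add (integrable_const 1) hmean,
          integral_add hA.integrable_sq (hB.integrable_sq.const_mul h), integral_const_mul]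
        simp
    _ ≤ ∫ ω, (1 + (ρ + μ) * h) * (1 + Y ω ^ 2) ∂P := by
        refine integral_mono ?_ ?_ fun ω =>
          one_add_add_mul_sq_add_mul_sq_le_of_tamed hh.le (htame1 (Y ω)) (htame2 (Y ω))
        · exact (integrable_const 1).add hmean
        · exact ((integrable_const 1).add hY.integrable_sq).const_mul _
    _ = (1 + (ρ + μ) * h) * ∫ ω, (1 + Y ω ^ 2) ∂P := integral_const_mul _ _

end TamedEulerStep

theorem stmt_0_general
    {Ω : Type*} [MeasurableSpace Ω] (P : Measure Ω) [IsProbabilityMeasure P]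
    (T h μ ρ : ℝ) (hT : 0 < T) (hh0 : 0 < h) (hμ : 0 < μ) (hρ : 0 < ρ)
    (bh sh : ℝ → ℝ) (hbm : Measurable bh) (hsm : Measurable sh)
    (X ΔW : ℕ → Ω → ℝ)
    (hXm : ∀ k, Measurable (X k))
    (hWm : ∀ k, Measurable (ΔW k))
    (hlaw : ∀ k, P.map (ΔW (k + 1)) = gaussianReal 0 ⟨h, hh0.le⟩)
    (hindep : ∀ k, IndepFun (fun ω => fun i : Fin (k + 1) => X i ω) (ΔW (k + 1)) P)
    (hscheme : ∀ k ω, X (k + 1) ω = X k ω + bh (X k ω) * h + sh (X k ω) * ΔW (k + 1) ω)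
    (hX0 : Integrable (fun ω => (X 0 ω) ^ 2) P)
    (htame1 : ∀ x : ℝ, |bh x| ^ 2 * h ≤ μ * (1 + x ^ 2))
    (htame2 : ∀ x : ℝ, 2 * x * bh x + |sh x| ^ 2 ≤ ρ * (1 + x ^ 2)) :
    (∀ k, ∫ ω, (1 + (X (k + 1) ω) ^ 2) ∂P ≤ (1 + (ρ + μ) * h) * ∫ ω, (1 + (X k ω) ^ 2) ∂P)
      ∧ ∀ k ≤ ⌊T / h⌋₊, ∫ ω, (X k ω) ^ 2 ∂P
        ≤ Real.exp ((ρ + μ) * T) * ∫ ω, (1 + (X 0 ω) ^ 2) ∂P := by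
  have hstep : ∀ k, MemLp (X k) 2 P → MemLp (X (k + 1)) 2 P ∧
      ∫ ω, (1 + X (k + 1) ω ^ 2) ∂P ≤ (1 + (ρ + μ) * h) * ∫ ω, (1 + X k ω ^ 2) ∂P := by
    intro k hk
    rw [funext (hscheme k)]
    exact tamedEuler_step_moment_le hh0 hbm hsm hk
      (memLp_of_map_eq_gaussianReal (hWm _) (hlaw k) 2)
      (integral_eq_zero_of_map_eq_gaussianReal (hWm _) (hlaw k))
      (integral_sq_eq_of_map_eq_gaussianReal (hWm _) (hlaw k))
      ((hindep k).comp (measurable_pi_apply (Fin.last k)) measurable_id) htame1 htame2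
  have hL2 : ∀ k, MemLp (X k) 2 P := fun k => by
    induction k with
    | zero => exact (memLp_two_iff_integrable_sq (hXm 0).aestronglyMeasurable).mpr hX0
    | succ k hk => exact (hstep k hk).1
  have hgrowth k := (hstep k (hL2 k)).2
  refine ⟨hgrowth, fun k hk => ?_⟩
  calc ∫ ω, X k ω ^ 2 ∂P ≤ ∫ ω, (1 + X k ω ^ 2) ∂P :=
        integral_mono (hL2 k).integrable_sq ((integrable_const 1).add (hL2 k).integrable_sq)
          fun ω => by simp
    _ ≤ (1 + (ρ + μ) * h) ^ k * ∫ ω, (1 + X 0 ω ^ 2) ∂P :=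
        le_geom (u := fun j => ∫ ω, (1 + X j ω ^ 2) ∂P) (by positivity) k fun j _ => hgrowth j
    _ ≤ exp ((ρ + μ) * T) * ∫ ω, (1 + X 0 ω ^ 2) ∂P := by
        gcongr
        exact one_add_mul_pow_le_exp_of_le_floor (by positivity) hh0 hT.le hk

/-- V-integrability of the tamed Euler scheme for V(x) = |x|². -/
theorem stmt_0
    {Ω : Type*} [MeasurableSpace Ω] (P : Measure Ω) [IsProbabilityMeasure P]
    (T h μ ρ : ℝ) (hT : 0 < T) (hh0 : 0 < h) (hh1 : h ≤ 1) (hμ : 0 < μ) (hρ : 0 < ρ)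
    (bh sh : ℝ → ℝ) (hbm : Measurable bh) (hsm : Measurable sh)
    (X ΔW : ℕ → Ω → ℝ)
    (hXm : ∀ k, Measurable (X k))
    (hWm : ∀ k, Measurable (ΔW k))
    (hlaw : ∀ k, P.map (ΔW (k + 1)) = gaussianReal 0 ⟨h, hh0.le⟩)
    (hindep : ∀ k, IndepFun (fun ω => fun i : Fin (k + 1) => X i ω) (ΔW (k + 1)) P)
    (hscheme : ∀ k ω, X (k + 1) ω = X k ω + bh (X k ω) * h + sh (X k ω) * ΔW (k + 1) ω)
    (hX0 : Integrable (fun ω => (X 0 ω) ^ 2) P)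
    (htame1 : ∀ x : ℝ, |bh x| ^ 2 * h ≤ μ * (1 + x ^ 2))
    (htame2 : ∀ x : ℝ, 2 * x * bh x + |sh x| ^ 2 ≤ ρ * (1 + x ^ 2)) :
    (∀ k, ∫ ω, (1 + (X (k + 1) ω) ^ 2) ∂P ≤ (1 + (ρ + μ) * h) * ∫ ω, (1 + (X k ω) ^ 2) ∂P)
      ∧ ∀ k ≤ ⌊T / h⌋₊, ∫ ω, (X k ω) ^ 2 ∂P
        ≤ Real.exp ((ρ + μ) * T) * ∫ ω, (1 + (X 0 ω) ^ 2) ∂P :=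
  stmt_0_general P T h μ ρ hT hh0 hμ hρ bh sh hbm hsm X ΔW hXm hWm hlaw hindep hscheme hX0 htame1
    htame2
end

section
/- (One-step comparison preservation) Let ν^h, λ^h, σ^h : [0,∞) × ℝ → ℝ satisfy ν^h(t,x) ≤ λ^h(t,x) for all t, x, and |λ^h(t,x) − λ^h(t,y)| ≤ μ|x−y| h^{−α}, |σ^h(t,x) − σ^h(t,y)| ≤ μ|x−y| h^{−α/2} for all t, x, y, with 0 < α < 1 and μ > 0. Let ζ_h ∈ [−A_h, A_h] with A_h = √(2|log h|). If h^{1−α} + h^{(1−α)/2} A_h ≤ 1/μ, then for any x ≤ y and any t: x + ν^h(t,x)h + σ^h(t,x)√h ζ_h ≤ y + λ^h(t,y)h + σ^h(t,y)√h ζ_h. -/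
open Real

/-- one-step comparison preservation for the truncated-noise tamed Euler
schemes. -/
theorem stmt_12 (h α μ : ℝ) (hh0 : 0 < h) (hh1 : h < 1) (hα0 : 0 < α) (hα1 : α < 1)
    (hμ : 0 < μ)
    (nuh lamh σh : ℝ → ℝ → ℝ)
    (hcomp : ∀ t x : ℝ, 0 ≤ t → nuh t x ≤ lamh t x)
    (hlam : ∀ t x y : ℝ, 0 ≤ t → |lamh t x - lamh t y| ≤ μ * |x - y| * h ^ (-α))
    (hsig : ∀ t x y : ℝ, 0 ≤ t → |σh t x - σh t y| ≤ μ * |x - y| * h ^ (-(α / 2)))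
    (ζ : ℝ) (hζ : |ζ| ≤ Real.sqrt (2 * Real.log (1 / h)))
    (hsmall : h ^ (1 - α) + h ^ ((1 - α) / 2) * Real.sqrt (2 * Real.log (1 / h)) ≤ 1 / μ)
    (t x y : ℝ) (ht : 0 ≤ t) (hxy : x ≤ y) :
    x + nuh t x * h + σh t x * Real.sqrt h * ζ
      ≤ y + lamh t y * h + σh t y * Real.sqrt h * ζ := by
  set A := Real.sqrt (2 * Real.log (1 / h)) with hA
  have hA0 : 0 ≤ A := Real.sqrt_nonneg _
  have hd : 0 ≤ y - x := by linarith
  have habs : |y - x| = y - x := abs_of_nonneg hd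
  have hsq : Real.sqrt h = h ^ ((1:ℝ)/2) := Real.sqrt_eq_rpow h
  -- bound for drift Lipschitz term
  have h1 : (lamh t y - lamh t x) * h ≥ -(μ * (y - x) * h ^ (1 - α)) := by
    have := hlam t y x ht
    rw [habs] at this
    have hhh : h ^ (-α) * h = h ^ (1 - α) := by
      rw [show h ^ (1-α) = h ^ (-α + 1) by ring_nf,
        Real.rpow_add hh0, Real.rpow_one]
    have hb : |(lamh t y - lamh t x) * h| ≤ μ * (y - x) * h ^ (1 - α) := by
      rw [abs_mul, abs_of_pos hh0, ← hhh, ← mul_assoc]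
      exact mul_le_mul_of_nonneg_right this hh0.le
    linarith [neg_abs_le ((lamh t y - lamh t x) * h)]
  -- bound for diffusion term
  have h2 : (σh t y - σh t x) * Real.sqrt h * ζ ≥ -(μ * (y - x) * (h ^ ((1 - α)/2) * A)) := by
    have hs := hsig t y x ht
    rw [habs] at hs
    have hb : |(σh t y - σh t x) * Real.sqrt h * ζ| ≤ μ * (y - x) * (h ^ ((1 - α)/2) * A) := by
      rw [abs_mul, abs_mul, abs_of_nonneg (Real.sqrt_nonneg h)]
      have step1 : |σh t y - σh t x| * Real.sqrt h ≤ μ * (y - x) * h ^ ((1 - α)/2) := by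
        rw [hsq]
        calc |σh t y - σh t x| * h ^ ((1:ℝ)/2)
            ≤ μ * (y - x) * h ^ (-(α/2)) * h ^ ((1:ℝ)/2) :=
              mul_le_mul_of_nonneg_right hs (Real.rpow_nonneg hh0.le _)
          _ = μ * (y - x) * h ^ ((1 - α)/2) := by
              rw [mul_assoc, ← Real.rpow_add hh0]; ring_nf
      calc |σh t y - σh t x| * Real.sqrt h * |ζ|
          ≤ (μ * (y - x) * h ^ ((1 - α)/2)) * A := by
            apply mul_le_mul step1 hζ (abs_nonneg _)
            positivity
        _ = μ * (y - x) * (h ^ ((1 - α)/2) * A) := by ring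
    linarith [neg_abs_le ((σh t y - σh t x) * Real.sqrt h * ζ)]
  -- comparison term
  have h3 : 0 ≤ (lamh t x - nuh t x) * h := by
    have := hcomp t x ht
    nlinarith
  -- smallness
  have h4 : μ * (h ^ (1 - α) + h ^ ((1 - α)/2) * A) ≤ 1 := by
    have := mul_le_mul_of_nonneg_left hsmall hμ.le
    rw [mul_one_div, div_self hμ.ne'] at this
    exact this
  have key : 0 ≤ (y - x) * (1 - μ * (h ^ (1 - α) + h ^ ((1 - α)/2) * A)) := by
    apply mul_nonneg hd; linarith
  nlinarith [key]
end
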